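/- arXiv:2309.15716 — 4 statements merged into one kernel-verified Lean document; each statement's English description precedes it below -/
import Mathlib

section
/- For every integer n ≥ 2, the polynomial P(λ) = (8n³−12n²+2n+1)λ⁴ + (−64n⁶+192n⁵−192n⁴+64n³+4n²+2n−4)λ³ + (−96n⁵+224n⁴−168n³+52n²−18n+6)λ² + (32n⁵−112n⁴+128n³−68n²+22n−4)λ + (16n⁴−32n³+24n²−8n+1) satisfies P((2n−1)²) < 0 and P((2n−1)³) > 0; hence P has a real root strictly between (2n−1)² and (2n−1)³. -/
noncomputable def P (n x : ℝ) : ℝ :=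
    (8*n^3 - 12*n^2 + 2*n + 1) * x^4
  + (-64*n^6 + 192*n^5 - 192*n^4 + 64*n^3 + 4*n^2 + 2*n - 4) * x^3
  + (-96*n^5 + 224*n^4 - 168*n^3 + 52*n^2 - 18*n + 6) * x^2
  + (32*n^5 - 112*n^4 + 128*n^3 - 68*n^2 + 22*n - 4) * x
  + (16*n^4 - 32*n^3 + 24*n^2 - 8*n + 1)

theorem stmt_0 (n : ℕ) (hn : 2 ≤ n) :
    P n ((2*(n:ℝ)-1)^2) < 0 ∧ 0 < P n ((2*(n:ℝ)-1)^3) ∧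
    ∃ x : ℝ, (2*(n:ℝ)-1)^2 < x ∧ x < (2*(n:ℝ)-1)^3 ∧ P n x = 0 := by
  set t : ℝ := (n : ℝ) with ht0
  have ht : (2:ℝ) ≤ t := by rw [ht0]; exact_mod_cast hn
  have hs : (0:ℝ) ≤ t - 2 := by linarith
  have hA : P t ((2*t-1)^2) =
      -(276480 + 2377728*(t-2) + 9354240*(t-2)^2 + 22255616*(t-2)^3
        + 35652480*(t-2)^4 + 40494464*(t-2)^5 + 33421184*(t-2)^6
        + 20184192*(t-2)^7 + 8848128*(t-2)^8 + 2744320*(t-2)^9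
        + 571392*(t-2)^10 + 71680*(t-2)^11 + 4096*(t-2)^12) := by
    unfold P; ring
  have hB : P t ((2*t-1)^3) =
      921456 + 8679312*(t-2) + 37495440*(t-2)^2 + 98336592*(t-2)^3
      + 174638400*(t-2)^4 + 221744416*(t-2)^5 + 207088960*(t-2)^6
      + 144025984*(t-2)^7 + 74595584*(t-2)^8 + 28418048*(t-2)^9
      + 7740416*(t-2)^10 + 1427456*(t-2)^11 + 159744*(t-2)^12
      + 8192*(t-2)^13 := by
    unfold P; ring
  have p2 := pow_nonneg hs 2
  have p3 := pow_nonneg hs 3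
  have p4 := pow_nonneg hs 4
  have p5 := pow_nonneg hs 5
  have p6 := pow_nonneg hs 6
  have p7 := pow_nonneg hs 7
  have p8 := pow_nonneg hs 8
  have p9 := pow_nonneg hs 9
  have p10 := pow_nonneg hs 10
  have p11 := pow_nonneg hs 11
  have p12 := pow_nonneg hs 12
  have p13 := pow_nonneg hs 13
  have hAneg : P t ((2*t-1)^2) < 0 := by rw [hA]; linarith
  have hBpos : 0 < P t ((2*t-1)^3) := by rw [hB]; linarith
  refine ⟨hAneg, hBpos, ?_⟩
  have hm : (3:ℝ) ≤ 2*t - 1 := by linarith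
  have hab : (2*t-1)^2 ≤ (2*t-1)^3 :=
    pow_le_pow_right₀ (by linarith) (by norm_num)
  have hcont : ContinuousOn (fun x => P t x) (Set.Icc ((2*t-1)^2) ((2*t-1)^3)) := by
    apply Continuous.continuousOn
    unfold P
    continuity
  have h0 : (0:ℝ) ∈ Set.Ioo (P t ((2*t-1)^2)) (P t ((2*t-1)^3)) := ⟨hAneg, hBpos⟩
  have := intermediate_value_Ioo hab hcont h0
  obtain ⟨x, hx, hx0⟩ := this
  exact ⟨x, hx.1, hx.2, hx0⟩
end

section
/- For every integer n ≥ 2, the polynomial P(λ) (as defined) satisfies P(−2) > 0, P(−1/n) < 0, P(−1/(2n−1)) > 0, and P(1) < 0; consequently P has three real roots in the interval (−2, 1). -/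
/-!
Three sign changes of `P n` along `-2 < -1/n < -1/(2n-1) < 1` give three roots by the
intermediate value theorem. The values at `1` and `-1/(2n-1)` factor completely; the value at
`-2`, and the value at `-1/n` times `n⁴`, are polynomials in `n - 2` whose coefficients all
have one sign, so their signs are clear for `n ≥ 2`.
-/

open Set

theorem exists_three_zeros_of_sign_changes {f : ℝ → ℝ} {a b c d : ℝ}
    (hf : ContinuousOn f (Icc a d)) (hab : a < b) (hbc : b < c) (hcd : c < d)
    (ha : 0 < f a) (hb : f b < 0) (hc : 0 < f c) (hd : f d < 0) :
    ∃ r₁ r₂ r₃ : ℝ, r₁ < r₂ ∧ r₂ < r₃ ∧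
      r₁ ∈ Ioo a d ∧ r₂ ∈ Ioo a d ∧ r₃ ∈ Ioo a d ∧ f r₁ = 0 ∧ f r₂ = 0 ∧ f r₃ = 0 := by
  obtain ⟨r₁, ⟨har₁, hr₁b⟩, hr₁⟩ := intermediate_value_Ioo' hab.le
    (hf.mono (Icc_subset_Icc le_rfl (hbc.trans hcd).le)) ⟨hb, ha⟩
  obtain ⟨r₂, ⟨hbr₂, hr₂c⟩, hr₂⟩ := intermediate_value_Ioo hbc.le
    (hf.mono (Icc_subset_Icc hab.le hcd.le)) ⟨hb, hc⟩
  obtain ⟨r₃, ⟨hcr₃, hr₃d⟩, hr₃⟩ := intermediate_value_Ioo' hcd.le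
    (hf.mono (Icc_subset_Icc (hab.trans hbc).le le_rfl)) ⟨hd, hc⟩
  exact ⟨r₁, r₂, r₃, hr₁b.trans hbr₂, hr₂c.trans hcr₃, ⟨har₁, by linarith⟩,
    ⟨by linarith, by linarith⟩, ⟨by linarith, hr₃d⟩, hr₁, hr₂, hr₃⟩

theorem continuous_P (n : ℝ) : Continuous (P n) := by
  unfold P
  fun_prop

theorem P_one (n : ℝ) : P n 1 = -64 * n ^ 4 * (n - 1) ^ 2 := by
  unfold P
  ring

theorem P_neg_one_div_two_mul_sub_one {n : ℝ} (hn : 2 * n - 1 ≠ 0) :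
    P n (-1 / (2 * n - 1)) = 32 * n ^ 4 * (n - 1) / (2 * n - 1) ^ 3 := by
  generalize hd : 2 * n - 1 = d at hn ⊢
  obtain rfl : n = (d + 1) / 2 := by linarith
  unfold P
  field_simp
  ring

theorem P_neg_two (n : ℝ) :
    P n (-2) = 512 * (n - 2) ^ 6 + 4160 * (n - 2) ^ 5 + 13552 * (n - 2) ^ 4
      + 22592 * (n - 2) ^ 3 + 20368 * (n - 2) ^ 2 + 9428 * (n - 2) + 1721 := by
  unfold P
  ring

theorem P_neg_one_div {n : ℝ} (hn : n ≠ 0) :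
    P n (-1 / n) = -(16 * (n - 2) ^ 8 + 208 * (n - 2) ^ 7 + 1192 * (n - 2) ^ 6
      + 3916 * (n - 2) ^ 5 + 7993 * (n - 2) ^ 4 + 10226 * (n - 2) ^ 3 + 7836 * (n - 2) ^ 2
      + 3186 * (n - 2) + 499) / n ^ 4 := by
  unfold P
  field_simp
  ring

theorem P_one_neg {n : ℝ} (hn : 1 < n) : P n 1 < 0 := by
  rw [P_one]
  have : 0 < n ^ 4 * (n - 1) ^ 2 := by
    have : 0 < n - 1 := by linarith
    positivity
  linarith

theorem P_neg_one_div_two_mul_sub_one_pos {n : ℝ} (hn : 1 < n) :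
    0 < P n (-1 / (2 * n - 1)) := by
  have h₁ : 0 < n - 1 := by linarith
  have h₂ : 0 < 2 * n - 1 := by linarith
  rw [P_neg_one_div_two_mul_sub_one h₂.ne']
  positivity

theorem P_neg_two_pos {n : ℝ} (hn : 2 ≤ n) : 0 < P n (-2) := by
  have hm : 0 ≤ n - 2 := by linarith
  rw [P_neg_two]
  linarith [pow_nonneg hm 6, pow_nonneg hm 5, pow_nonneg hm 4, pow_nonneg hm 3,
    pow_nonneg hm 2]

theorem P_neg_one_div_neg {n : ℝ} (hn : 2 ≤ n) : P n (-1 / n) < 0 := by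
  have hm : 0 ≤ n - 2 := by linarith
  rw [P_neg_one_div (by positivity)]
  refine div_neg_of_neg_of_pos ?_ (by positivity)
  linarith [pow_nonneg hm 8, pow_nonneg hm 7, pow_nonneg hm 6, pow_nonneg hm 5,
    pow_nonneg hm 4, pow_nonneg hm 3, pow_nonneg hm 2]

theorem stmt_1 (n : ℕ) (hn : 2 ≤ n) :
    0 < P n (-2) ∧ P n (-1/(n:ℝ)) < 0 ∧ 0 < P n (-1/(2*(n:ℝ)-1)) ∧ P n 1 < 0 ∧
    ∃ r₁ r₂ r₃ : ℝ, r₁ < r₂ ∧ r₂ < r₃ ∧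
      r₁ ∈ Set.Ioo (-2 : ℝ) 1 ∧ r₂ ∈ Set.Ioo (-2 : ℝ) 1 ∧ r₃ ∈ Set.Ioo (-2 : ℝ) 1 ∧
      P n r₁ = 0 ∧ P n r₂ = 0 ∧ P n r₃ = 0 := by
  have hn : (2 : ℝ) ≤ n := by exact_mod_cast hn
  have h₁ := P_neg_two_pos hn
  have h₂ := P_neg_one_div_neg hn
  have h₃ := P_neg_one_div_two_mul_sub_one_pos (n := n) (by linarith)
  have h₄ := P_one_neg (n := n) (by linarith)
  have hab : (-2 : ℝ) < -1 / n := by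
    rw [lt_div_iff₀ (by linarith)]
    linarith
  have hbc : -1 / (n : ℝ) < -1 / (2 * n - 1) := by
    rw [neg_div, neg_div, neg_lt_neg_iff]
    exact one_div_lt_one_div_of_lt (by linarith) (by linarith)
  have hcd : -1 / (2 * (n : ℝ) - 1) < 1 :=
    (div_neg_of_neg_of_pos (by norm_num) (by linarith)).trans one_pos
  exact ⟨h₁, h₂, h₃, h₄, exists_three_zeros_of_sign_changes (continuous_P n).continuousOn
    hab hbc hcd h₁ h₂ h₃ h₄⟩
end

section
/- The function g(z₁, z₂) = ((1−z₁)/z₁)·((1−z₂)/z₂) on (0,1)² is strictly convex on the set {(z₁,z₂) ∈ (0,1)² : z₁ + z₂ − z₁z₂ < 3/4}. -/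
noncomputable def g (p : ℝ × ℝ) : ℝ := ((1 - p.1)/p.1) * ((1 - p.2)/p.2)

private lemma hd_lin (c d t : ℝ) : HasDerivAt (fun s : ℝ => c + s*d) d t := by
  simpa using ((hasDerivAt_id t).mul_const d).const_add c

private lemma hd1 (c d t : ℝ) (h : c + t*d ≠ 0) :
    HasDerivAt (fun s => 1/(c + s*d) - 1) (-d/(c+t*d)^2) t := by
  simpa [one_div] using ((hd_lin c d t).inv h).sub_const 1

private lemma hd2 (c d t : ℝ) (h : c + t*d ≠ 0) :
    HasDerivAt (fun s => -d/(c + s*d)^2) (2*d^2/(c+t*d)^3) t := by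
  have hsq : HasDerivAt (fun s : ℝ => ((c + s*d)^2)⁻¹)
      (-(2*(c+t*d)^1*d) / ((c+t*d)^2)^2) t :=
    ((hd_lin c d t).pow 2).inv (pow_ne_zero 2 h)
  have h2 := hsq.const_mul (-d)
  have heq : -d * (-(2*(c+t*d)^1*d) / ((c+t*d)^2)^2) = 2*d^2/(c+t*d)^3 := by
    field_simp
  rw [heq] at h2
  simpa [div_eq_mul_inv] using h2

private lemma Qpos (U V d1 d2 : ℝ) (hU0 : 0 < U) (hU1 : U < 1) (hV0 : 0 < V) (hV1 : V < 1)
    (hc : U + V - U*V < 3/4) (hd : d1 ≠ 0 ∨ d2 ≠ 0) :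
    0 < d1^2*(1-V)*V^2 + d1*d2*U*V + d2^2*(1-U)*U^2 := by
  rcases eq_or_ne d2 0 with h2 | h2
  · rcases hd with h1 | h1
    · have h1' : 0 < d1^2 := by positivity
      subst h2
      nlinarith [mul_pos (mul_pos h1' (show (0:ℝ) < 1-V by linarith)) (pow_pos hV0 2)]
    · exact absurd h2 h1
  · have h4 : (0:ℝ) < 4*(1-V)*V^2 := by
      have := pow_pos hV0 2; nlinarith
    have key : 4*(1-V)*V^2 * (d1^2*(1-V)*V^2 + d1*d2*U*V + d2^2*(1-U)*U^2)
        = (2*(1-V)*V^2*d1 + U*V*d2)^2 + d2^2*U^2*V^2*(4*(1-U)*(1-V)-1) := by ring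
    have h5 : 0 < d2^2*U^2*V^2*(4*(1-U)*(1-V)-1) := by
      apply mul_pos (by positivity)
      nlinarith
    nlinarith [sq_nonneg (2*(1-V)*V^2*d1 + U*V*d2), key, h5, h4]

noncomputable def phi (x1 x2 d1 d2 t : ℝ) : ℝ :=
  (1/(x1 + t*d1) - 1) * (1/(x2 + t*d2) - 1)

noncomputable def Dphi (x1 x2 d1 d2 t : ℝ) : ℝ :=
  (-d1/(x1+t*d1)^2)*(1/(x2+t*d2)-1) + (1/(x1+t*d1)-1)*(-d2/(x2+t*d2)^2)

private lemma phi_deriv (x1 x2 d1 d2 t : ℝ) (h1 : x1+t*d1 ≠ 0) (h2 : x2+t*d2 ≠ 0) :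
    HasDerivAt (phi x1 x2 d1 d2) (Dphi x1 x2 d1 d2 t) t :=
  (hd1 x1 d1 t h1).mul (hd1 x2 d2 t h2)

private lemma Dphi_deriv (x1 x2 d1 d2 t : ℝ) (h1 : x1+t*d1 ≠ 0) (h2 : x2+t*d2 ≠ 0) :
    HasDerivAt (Dphi x1 x2 d1 d2)
      ((2*d1^2/(x1+t*d1)^3)*(1/(x2+t*d2)-1) + (-d1/(x1+t*d1)^2)*(-d2/(x2+t*d2)^2)
        + ((-d1/(x1+t*d1)^2)*(-d2/(x2+t*d2)^2) + (1/(x1+t*d1)-1)*(2*d2^2/(x2+t*d2)^3))) t :=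
  ((hd2 x1 d1 t h1).mul (hd1 x2 d2 t h2)).add ((hd1 x1 d1 t h1).mul (hd2 x2 d2 t h2))

private lemma Srw (U V d1 d2 : ℝ) (hU : U ≠ 0) (hV : V ≠ 0) :
    (2*d1^2/U^3)*(1/V-1) + (-d1/U^2)*(-d2/V^2)
      + ((-d1/U^2)*(-d2/V^2) + (1/U-1)*(2*d2^2/V^3))
    = 2*(d1^2*(1-V)*V^2 + d1*d2*U*V + d2^2*(1-U)*U^2) / (U^3*V^3) := by
  field_simp
  ring

private lemma g_eq (p : ℝ × ℝ) (h1 : p.1 ≠ 0) (h2 : p.2 ≠ 0) :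
    g p = (1/p.1 - 1)*(1/p.2 - 1) := by
  unfold g; field_simp

private lemma combo_mem (p1 p2 q1 q2 a b : ℝ)
    (hp01 : 0 < p1) (hp11 : p1 < 1) (hp02 : 0 < p2) (hp12 : p2 < 1)
    (hq01 : 0 < q1) (hq11 : q1 < 1) (hq02 : 0 < q2) (hq12 : q2 < 1)
    (hpc : p1 + p2 - p1*p2 < 3/4) (hqc : q1 + q2 - q1*q2 < 3/4)
    (ha : 0 ≤ a) (hb : 0 ≤ b) (hab : a + b = 1) :
    (a*p1 + b*q1) + (a*p2 + b*q2) - (a*p1 + b*q1)*(a*p2 + b*q2) < 3/4 := by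
  have hP : (1-p1)*(1-p2) > 1/4 := by nlinarith
  have hQ : (1-q1)*(1-q2) > 1/4 := by nlinarith
  have hS : (1-p1)*(1-q2) + (1-q1)*(1-p2) > 1/2 := by
    nlinarith [sq_nonneg ((1-p1)*(1-q2) - (1-q1)*(1-p2)),
      mul_pos (show (0:ℝ) < 1-p1 by linarith) (show (0:ℝ) < 1-q2 by linarith),
      mul_pos (show (0:ℝ) < 1-q1 by linarith) (show (0:ℝ) < 1-p2 by linarith)]
  have h1 : a^2*((1-p1)*(1-p2) - 1/4) ≥ 0 := mul_nonneg (sq_nonneg a) (by linarith)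
  have h2 : b^2*((1-q1)*(1-q2) - 1/4) ≥ 0 := mul_nonneg (sq_nonneg b) (by linarith)
  have h3 : a*b*((1-p1)*(1-q2) + (1-q1)*(1-p2) - 1/2) ≥ 0 :=
    mul_nonneg (mul_nonneg ha hb) (by linarith)
  have hb' : b = 1 - a := by linarith
  subst hb'
  have key : (1 - (a*p1+(1-a)*q1))*(1 - (a*p2+(1-a)*q2)) - 1/4
      = a^2*((1-p1)*(1-p2) - 1/4) + (1-a)^2*((1-q1)*(1-q2) - 1/4)
        + a*(1-a)*((1-p1)*(1-q2) + (1-q1)*(1-p2) - 1/2) := by ring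
  rcases eq_or_lt_of_le ha with ha0 | ha0
  · have h2' : 0 < (1-a)^2*((1-q1)*(1-q2) - 1/4) := by rw [← ha0]; nlinarith
    linarith [key, h1, h2', h3]
  · have h1' : 0 < a^2*((1-p1)*(1-p2) - 1/4) :=
      mul_pos (pow_pos ha0 2) (by linarith)
    linarith [key, h1', h2, h3]

set_option maxHeartbeats 1000000 in
theorem stmt_5 :
    StrictConvexOn ℝ
      {p : ℝ × ℝ | p.1 ∈ Set.Ioo (0:ℝ) 1 ∧ p.2 ∈ Set.Ioo (0:ℝ) 1 ∧
        p.1 + p.2 - p.1 * p.2 < 3/4} g := by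
  set S : Set (ℝ × ℝ) := {p : ℝ × ℝ | p.1 ∈ Set.Ioo (0:ℝ) 1 ∧ p.2 ∈ Set.Ioo (0:ℝ) 1 ∧
        p.1 + p.2 - p.1 * p.2 < 3/4} with hSdef
  have hmemS : ∀ p : ℝ × ℝ, p ∈ S ↔
      (0 < p.1 ∧ p.1 < 1) ∧ (0 < p.2 ∧ p.2 < 1) ∧ p.1 + p.2 - p.1*p.2 < 3/4 := by
    intro p
    simp [hSdef, Set.mem_Ioo, and_assoc]
  have hconv : Convex ℝ S := by
    intro p hp q hq a b ha hb hab
    rw [hmemS] at hp hq ⊢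
    obtain ⟨⟨hp01, hp11⟩, ⟨hp02, hp12⟩, hpc⟩ := hp
    obtain ⟨⟨hq01, hq11⟩, ⟨hq02, hq12⟩, hqc⟩ := hq
    have hfst : (a • p + b • q).1 = a*p.1 + b*q.1 := rfl
    have hsnd : (a • p + b • q).2 = a*p.2 + b*q.2 := rfl
    rw [hfst, hsnd]
    refine ⟨⟨?_, ?_⟩, ⟨?_, ?_⟩, ?_⟩
    · have := convex_Ioo (0:ℝ) 1 ⟨hp01,hp11⟩ ⟨hq01,hq11⟩ ha hb hab
      simpa using this.1
    · have := convex_Ioo (0:ℝ) 1 ⟨hp01,hp11⟩ ⟨hq01,hq11⟩ ha hb hab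
      simpa using this.2
    · have := convex_Ioo (0:ℝ) 1 ⟨hp02,hp12⟩ ⟨hq02,hq12⟩ ha hb hab
      simpa using this.1
    · have := convex_Ioo (0:ℝ) 1 ⟨hp02,hp12⟩ ⟨hq02,hq12⟩ ha hb hab
      simpa using this.2
    · exact combo_mem p.1 p.2 q.1 q.2 a b hp01 hp11 hp02 hp12 hq01 hq11 hq02 hq12
        hpc hqc ha hb hab
  refine ⟨hconv, fun x hx y hy hxy a b ha hb hab => ?_⟩
  obtain ⟨⟨hx01,hx11⟩,⟨hx02,hx12⟩,hxc⟩ := (hmemS x).mp hx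
  obtain ⟨⟨hy01,hy11⟩,⟨hy02,hy12⟩,hyc⟩ := (hmemS y).mp hy
  set d1 := y.1 - x.1 with hd1def
  set d2 := y.2 - x.2 with hd2def
  have hdne : d1 ≠ 0 ∨ d2 ≠ 0 := by
    by_contra h
    push_neg at h
    exact hxy (Prod.ext (by rw [hd1def] at h; linarith [h.1])
      (by rw [hd2def] at h; linarith [h.2]))
  -- points along the segment are in S
  have hmem : ∀ t ∈ Set.Icc (0:ℝ) 1,
      (0 < x.1 + t*d1 ∧ x.1 + t*d1 < 1) ∧ (0 < x.2 + t*d2 ∧ x.2 + t*d2 < 1) ∧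
      (x.1 + t*d1) + (x.2 + t*d2) - (x.1 + t*d1)*(x.2 + t*d2) < 3/4 := by
    intro t ht
    have h1t : (0:ℝ) ≤ 1 - t := by linarith [ht.2]
    have hcm := hconv hx hy h1t ht.1 (by ring)
    have hco : ((1-t) • x + t • y) = ((x.1 + t*d1, x.2 + t*d2) : ℝ × ℝ) := by
      apply Prod.ext
      · show (1-t)*x.1 + t*y.1 = x.1 + t*d1
        rw [hd1def]; ring
      · show (1-t)*x.2 + t*y.2 = x.2 + t*d2
        rw [hd2def]; ring
    rw [hco, hmemS] at hcm
    exact hcm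
  -- strict convexity of phi on [0,1]
  have hcont : ContinuousOn (phi x.1 x.2 d1 d2) (Set.Icc 0 1) := by
    intro t ht
    obtain ⟨⟨hu0,_⟩,⟨hv0,_⟩,_⟩ := hmem t ht
    exact ((phi_deriv x.1 x.2 d1 d2 t (ne_of_gt hu0) (ne_of_gt hv0)).continuousAt).continuousWithinAt
  have hc1 : Continuous fun t : ℝ => x.1 + t*d1 := by continuity
  have hc2 : Continuous fun t : ℝ => x.2 + t*d2 := by continuity
  have hV : IsOpen {t : ℝ | x.1 + t*d1 ≠ 0 ∧ x.2 + t*d2 ≠ 0} :=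
    (isOpen_compl_singleton.preimage hc1).inter (isOpen_compl_singleton.preimage hc2)
  have hderiv2 : ∀ t ∈ interior (Set.Icc (0:ℝ) 1), 0 < (deriv^[2] (phi x.1 x.2 d1 d2)) t := by
    intro t ht
    rw [interior_Icc] at ht
    obtain ⟨⟨hu0,hu1⟩,⟨hv0,hv1⟩,hcns⟩ := hmem t (Set.Ioo_subset_Icc_self ht)
    have h1 : x.1 + t*d1 ≠ 0 := ne_of_gt hu0
    have h2 : x.2 + t*d2 ≠ 0 := ne_of_gt hv0
    have hEq : deriv (phi x.1 x.2 d1 d2) =ᶠ[nhds t] Dphi x.1 x.2 d1 d2 := by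
      filter_upwards [hV.mem_nhds ⟨h1, h2⟩] with s hs
      exact (phi_deriv x.1 x.2 d1 d2 s hs.1 hs.2).deriv
    have h2it : (deriv^[2] (phi x.1 x.2 d1 d2)) t = deriv (deriv (phi x.1 x.2 d1 d2)) t := rfl
    rw [h2it, hEq.deriv_eq, (Dphi_deriv x.1 x.2 d1 d2 t h1 h2).deriv]
    have hQ := Qpos (x.1+t*d1) (x.2+t*d2) d1 d2 hu0 hu1 hv0 hv1 hcns hdne
    rw [Srw _ _ _ _ h1 h2]
    exact div_pos (by linarith) (by positivity)
  have hstrict : StrictConvexOn ℝ (Set.Icc (0:ℝ) 1) (phi x.1 x.2 d1 d2) :=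
    strictConvexOn_of_deriv2_pos (convex_Icc 0 1) hcont hderiv2
  have key := hstrict.2 (Set.left_mem_Icc.mpr zero_le_one) (Set.right_mem_Icc.mpr zero_le_one)
    (zero_ne_one) ha hb hab
  simp only [smul_eq_mul, mul_zero, mul_one, zero_add] at key
  -- translate back to g
  have hptS := hconv hx hy ha.le hb.le hab
  obtain ⟨⟨hz0,_⟩,⟨hw0,_⟩,_⟩ := (hmemS _).mp hptS
  have e0 : phi x.1 x.2 d1 d2 0 = g x := by
    rw [g_eq x (ne_of_gt hx01) (ne_of_gt hx02)]
    simp [phi]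
  have e1 : phi x.1 x.2 d1 d2 1 = g y := by
    rw [g_eq y (ne_of_gt hy01) (ne_of_gt hy02)]
    unfold phi
    rw [show x.1 + 1*d1 = y.1 by rw [hd1def]; ring, show x.2 + 1*d2 = y.2 by rw [hd2def]; ring]
  have eb : phi x.1 x.2 d1 d2 b = g (a • x + b • y) := by
    rw [g_eq _ (ne_of_gt hz0) (ne_of_gt hw0)]
    unfold phi
    have hfst : (a • x + b • y).1 = a*x.1 + b*y.1 := rfl
    have hsnd : (a • x + b • y).2 = a*x.2 + b*y.2 := rfl
    rw [hfst, hsnd, show x.1 + b*d1 = a*x.1 + b*y.1 by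
        rw [hd1def]; have : a = 1 - b := by linarith
        rw [this]; ring,
      show x.2 + b*d2 = a*x.2 + b*y.2 by
        rw [hd2def]; have : a = 1 - b := by linarith
        rw [this]; ring]
  rw [e0, e1, eb] at key
  simpa using key
end

section
/- Let n ≥ 2 and let a, b, c > 0 satisfy 2na + 8n(n−1)²b + 4n(n−1)c = 1 and suppose the three quantities ((1−a)/a)·(1/(2n−1)), ((1−b)/b)·((1−2na)/(4n(n−1)−1+2na)), and ((1−c)/c)·(2n−1) are all equal to a common value β. Then β is a root of the polynomial P (as defined). -/
/-!
Each of the three equations is linear in its unknown once denominators are cleared, so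
`a = 1 / A`, `c = (2n - 1) / C` and `b = (A - 2n) / D` with
`A = 1 + (2n - 1) β`, `C = 2n - 1 + β` and `D = (A - 2n)(1 - β) + 4n(n - 1) β A`.
Substituting into the normalisation `2na + 8n(n - 1)²b + 4n(n - 1)c = 1` and multiplying by
`A C D` leaves a quartic in `β`, which is `(2n - 1) P(n, β)`.
-/

section
variable {x r p q β : ℝ}

theorem mul_add_eq_of_one_sub_div_mul_eq (hx : x ≠ 0) (h : (1 - x) / x * r = β) :
    x * (r + β) = r := by
  rw [← h]
  field_simp
  ring

theorem mul_add_mul_eq_of_one_sub_div_mul_div_eq (hx : x ≠ 0) (hq : q ≠ 0)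
    (h : (1 - x) / x * (p / q) = β) : x * (p + β * q) = p := by
  have h' := mul_add_eq_of_one_sub_div_mul_eq hx h
  field_simp at h'
  linear_combination h'

end

theorem two_mul_sub_one_mul_P_eq_zero {N a b c β : ℝ}
    (ha : a * (1 + β * (2*N - 1)) = 1)
    (hb : b * ((1 - 2*N*a) + β * (4*N*(N-1) - 1 + 2*N*a)) = 1 - 2*N*a)
    (hc : c * (2*N - 1 + β) = 2*N - 1)
    (hsum : 2*N*a + 8*N*(N-1)^2*b + 4*N*(N-1)*c = 1) :
    (2*N - 1) * P N β = 0 := by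
  set A := 1 + β * (2*N - 1)
  set C := 2*N - 1 + β
  set D := (A - 2*N) * (1 - β) + 4*N*(N-1) * β * A
  have hbD : b * D = A - 2*N := by
    linear_combination A * hb + 2*N*((1 - β) * b - 1) * ha
  have hP : (2*N - 1) * P N β
      = (A - 2*N) * D * C - 8*N*(N-1)^2 * (A - 2*N) * A * C - 4*N*(N-1) * (2*N-1) * A * D := by
    unfold P
    ring
  rw [hP]
  linear_combination (-(A * D * C)) * hsum + 2*N*D*C * ha + 8*N*(N-1)^2*A*C * hbD
    + 4*N*(N-1)*A*D * hc

theorem stmt_10_general (n : ℕ) (hn : 2 ≤ n) (a b c β : ℝ)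
    (ha : 0 < a) (hb : 0 < b) (hc : 0 < c)
    (hsum : 2*(n:ℝ)*a + 8*(n:ℝ)*((n:ℝ)-1)^2*b + 4*(n:ℝ)*((n:ℝ)-1)*c = 1)
    (heq1 : ((1-a)/a) * (1/(2*(n:ℝ)-1)) = β)
    (heq2 : ((1-b)/b) * ((1-2*(n:ℝ)*a)/(4*(n:ℝ)*((n:ℝ)-1)-1+2*(n:ℝ)*a)) = β)
    (heq3 : ((1-c)/c) * (2*(n:ℝ)-1) = β) :
    P n β = 0 := by
  have hN : (2 : ℝ) ≤ n := by exact_mod_cast hn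
  have hN1 : 2*(n:ℝ) - 1 ≠ 0 := by linarith
  have hden : 4*(n:ℝ)*((n:ℝ)-1) - 1 + 2*(n:ℝ)*a ≠ 0 := by nlinarith
  have ha' := mul_add_mul_eq_of_one_sub_div_mul_div_eq ha.ne' hN1 heq1
  have hb' := mul_add_mul_eq_of_one_sub_div_mul_div_eq hb.ne' hden heq2
  have hc' := mul_add_eq_of_one_sub_div_mul_eq hc.ne' heq3
  exact (mul_eq_zero.mp (two_mul_sub_one_mul_P_eq_zero ha' hb' hc' hsum)).resolve_left hN1

theorem stmt_10 (n : ℕ) (hn : 2 ≤ n) (a b c β : ℝ)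
    (ha : 0 < a) (hb : 0 < b) (hc : 0 < c) (h2na : 1 - 2*(n:ℝ)*a > 0)
    (hsum : 2*(n:ℝ)*a + 8*(n:ℝ)*((n:ℝ)-1)^2*b + 4*(n:ℝ)*((n:ℝ)-1)*c = 1)
    (heq1 : ((1-a)/a) * (1/(2*(n:ℝ)-1)) = β)
    (heq2 : ((1-b)/b) * ((1-2*(n:ℝ)*a)/(4*(n:ℝ)*((n:ℝ)-1)-1+2*(n:ℝ)*a)) = β)
    (heq3 : ((1-c)/c) * (2*(n:ℝ)-1) = β) :
    P n β = 0 :=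
  stmt_10_general n hn a b c β ha hb hc hsum heq1 heq2 heq3
end
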